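/- arXiv:1901.09137 — 4 statements merged into one kernel-verified Lean document; each statement's English description precedes it below -/
import Mathlib

section
/- Let Γ be a well-bounded partition of ℚ, and for x ∈ 𝓕, r > 0 real, let B_Γ(x,r) = {y ∈ 𝓕 | ‖x−y‖_{Γ,μ(r)} < r} where μ(r) = ⌈1/r⌉. If 0 < r₁ < r₂ and r = min(r₁, r₂−r₁), then for every y ∈ B_Γ(x,r) one has B_Γ(y,r₁) ⊆ B_Γ(x,r₂); in particular B_Γ(x,r₁) ⊆ B_Γ(x,r₂). -/
open scoped Classical

/-- The Hahn field `𝓕` of maps `ℚ → ℝ` with well-ordered support. -/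
noncomputable abbrev F := HahnSeries ℚ ℝ

/-- A subset `A` of `ℚ` is well-bounded if every nonempty subset of `A`
has a maximum element. -/
def WellBoundedSet (A : Set ℚ) : Prop :=
  ∀ S ⊆ A, S.Nonempty → ∃ m ∈ S, ∀ a ∈ S, a ≤ m

/-- A well-bounded partition of `ℚ`: a countable family of mutually disjoint
well-bounded sets whose union is all of `ℚ`. -/
def IsWBPartition (γ : ℕ → Set ℚ) : Prop :=
  Pairwise (Function.onFun Disjoint γ) ∧ (∀ i, WellBoundedSet (γ i)) ∧
    (⋃ i, γ i) = Set.univ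

/-- A finite well-bounded partition of `ℚ`: each piece is moreover finite. -/
def IsFinWBPartition (γ : ℕ → Set ℚ) : Prop :=
  IsWBPartition γ ∧ ∀ i, (γ i).Finite

/-- `Γ_n`, the union of the first `n` pieces of the partition. -/
def Gam (γ : ℕ → Set ℚ) (n : ℕ) : Set ℚ := ⋃ i < n, γ i

/-- The semi-norm `‖x‖_{Γ,n} = max {|x[q]| : q ∈ Γ_n}` induced by a well-bounded
partition `Γ` of `ℚ` (realized as a supremum together with `0`). -/
noncomputable def gnorm (γ : ℕ → Set ℚ) (n : ℕ) (x : F) : ℝ :=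
  sSup (insert 0 ((fun q => |x.coeff q|) '' Gam γ n))

/-- `μ(r) = ⌈1/r⌉`. -/
noncomputable def mu (r : ℝ) : ℕ := ⌈1 / r⌉₊

/-- The pseudo-ball `B_Γ(x, r) = {y | ‖x − y‖_{Γ,μ(r)} < r}`. -/
def PB (γ : ℕ → Set ℚ) (x : F) (r : ℝ) : Set F :=
  {y : F | gnorm γ (mu r) (x - y) < r}

/-- The topology `τ_Γ` induced by the semi-norms of the partition `Γ`, as the
collection of its open sets. -/
def Top' (γ : ℕ → Set ℚ) : Set (Set F) :=
  {O : Set F | ∀ x ∈ O, ∃ r : ℝ, 0 < r ∧ PB γ x r ⊆ O}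

/-
The semi-norm `‖·‖_{Γ,n}` satisfies the triangle inequality and grows with `n`, while `μ` is
antitone; so for `y ∈ B_Γ(x, r)` and `z ∈ B_Γ(y, r₁)`, measuring both distances at the coarser
level `μ(r₂)` gives `‖x − z‖_{Γ,μ(r₂)} < r + r₁ ≤ r₂`. The one place where well-boundedness
enters is that `Γ_n` meets the well-ordered support of a Hahn series in a set that is well-founded
in both directions, hence finite, so the supremum defining the semi-norm is a genuine maximum.
-/

lemma WellBoundedSet.mono {A B : Set ℚ} (hB : WellBoundedSet B) (hAB : A ⊆ B) :
    WellBoundedSet A :=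
  fun S hS hne => hB S (hS.trans hAB) hne

lemma WellBoundedSet.wellFoundedGT {A : Set ℚ} (hA : WellBoundedSet A) : WellFoundedGT A := by
  refine ⟨WellFounded.wellFounded_iff_has_min.2 fun S ⟨a, ha⟩ => ?_⟩
  obtain ⟨_, ⟨m, hm, rfl⟩, hmax⟩ :=
    hA (Subtype.val '' S) (by rintro _ ⟨b, -, rfl⟩; exact b.2) ⟨a, a, ha, rfl⟩
  exact ⟨m, hm, fun b hb => not_lt.2 (hmax b ⟨b, hb, rfl⟩)⟩

lemma WellBoundedSet.finite_of_isPWO {A : Set ℚ} (hA : WellBoundedSet A) (hA' : A.IsPWO) :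
    A.Finite := by
  have : WellFoundedLT A := ⟨hA'.isWF⟩
  have : WellFoundedGT A := hA.wellFoundedGT
  exact Set.finite_coe_iff.1 (Finite.of_wellFoundedLT_wellFoundedGT A)

variable {γ : ℕ → Set ℚ} {n m : ℕ}

lemma Gam_mono (h : n ≤ m) : Gam γ n ⊆ Gam γ m :=
  Set.biUnion_subset_biUnion_left fun _ hi => lt_of_lt_of_le hi h

lemma finite_support_inter_Gam (hγ : ∀ i, WellBoundedSet (γ i)) (x : F) (n : ℕ) :
    (x.support ∩ Gam γ n).Finite := by
  rw [Gam, Set.inter_iUnion₂]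
  exact (Set.finite_lt_nat n).biUnion fun i _ =>
    ((hγ i).mono Set.inter_subset_right).finite_of_isPWO
      (x.isPWO_support.mono Set.inter_subset_left)

lemma bddAbove_abs_coeff_Gam (hγ : ∀ i, WellBoundedSet (γ i)) (x : F) (n : ℕ) :
    BddAbove (insert 0 ((fun q => |x.coeff q|) '' Gam γ n)) := by
  have hsub : (fun q => |x.coeff q|) '' Gam γ n ⊆
      insert 0 ((fun q => |x.coeff q|) '' (x.support ∩ Gam γ n)) := by
    rintro _ ⟨q, hq, rfl⟩
    by_cases hx : x.coeff q = 0
    · simp [hx]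
    · exact Set.mem_insert_of_mem _ ⟨q, ⟨hx, hq⟩, rfl⟩
  exact bddAbove_insert.2
    ((((finite_support_inter_Gam hγ x n).image _).insert 0).bddAbove.mono hsub)

lemma abs_coeff_le_gnorm (hγ : ∀ i, WellBoundedSet (γ i)) (x : F) {q : ℚ}
    (hq : q ∈ Gam γ n) : |x.coeff q| ≤ gnorm γ n x :=
  le_csSup (bddAbove_abs_coeff_Gam hγ x n) (Set.mem_insert_of_mem _ ⟨q, hq, rfl⟩)

lemma gnorm_le {x : F} {a : ℝ} (h : ∀ q ∈ Gam γ n, |x.coeff q| ≤ a) (ha : 0 ≤ a) :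
    gnorm γ n x ≤ a := by
  refine Real.sSup_le ?_ ha
  rintro _ (rfl | ⟨q, hq, rfl⟩)
  exacts [ha, h q hq]

lemma gnorm_nonneg (x : F) : 0 ≤ gnorm γ n x :=
  Real.sSup_nonneg <| by
    rintro _ (rfl | ⟨q, -, rfl⟩)
    exacts [le_rfl, abs_nonneg _]

lemma gnorm_zero : gnorm γ n 0 = 0 :=
  (gnorm_le (fun q _ => by simp) le_rfl).antisymm (gnorm_nonneg 0)

lemma gnorm_mono (hγ : ∀ i, WellBoundedSet (γ i)) (h : n ≤ m) (x : F) :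
    gnorm γ n x ≤ gnorm γ m x :=
  gnorm_le (fun _ hq => abs_coeff_le_gnorm hγ x (Gam_mono h hq)) (gnorm_nonneg x)

lemma gnorm_sub_le_add (hγ : ∀ i, WellBoundedSet (γ i)) (x y z : F) :
    gnorm γ n (x - z) ≤ gnorm γ n (x - y) + gnorm γ n (y - z) := by
  refine gnorm_le (fun q hq => ?_) (add_nonneg (gnorm_nonneg _) (gnorm_nonneg _))
  calc |(x - z).coeff q| = |(x - y).coeff q + (y - z).coeff q| := by simp
    _ ≤ |(x - y).coeff q| + |(y - z).coeff q| := abs_add_le _ _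
    _ ≤ gnorm γ n (x - y) + gnorm γ n (y - z) :=
      add_le_add (abs_coeff_le_gnorm hγ _ hq) (abs_coeff_le_gnorm hγ _ hq)

lemma mu_le_mu {r s : ℝ} (hr : 0 < r) (hrs : r ≤ s) : mu s ≤ mu r :=
  Nat.ceil_le_ceil (one_div_le_one_div_of_le hr hrs)

lemma self_mem_PB (x : F) {r : ℝ} (hr : 0 < r) : x ∈ PB γ x r := by
  simpa [PB, gnorm_zero] using hr

lemma gnorm_lt_of_mem_PB (hγ : ∀ i, WellBoundedSet (γ i)) {x y : F} {r s : ℝ} (hr : 0 < r)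
    (hrs : r ≤ s) (hy : y ∈ PB γ x r) : gnorm γ (mu s) (x - y) < r :=
  (gnorm_mono hγ (mu_le_mu hr hrs) _).trans_lt hy

/-- If `0 < r₁ < r₂` and `r = min (r₁, r₂ − r₁)`, then for every `y ∈ B_Γ(x, r)`
one has `B_Γ(y, r₁) ⊆ B_Γ(x, r₂)`; in particular `B_Γ(x, r₁) ⊆ B_Γ(x, r₂)`. -/
theorem pseudoBall_nested (γ : ℕ → Set ℚ) (hγ : IsWBPartition γ) (x : F)
    (r₁ r₂ : ℝ) (h₁ : 0 < r₁) (h₂ : r₁ < r₂) :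
    (∀ y ∈ PB γ x (min r₁ (r₂ - r₁)), PB γ y r₁ ⊆ PB γ x r₂) ∧
    PB γ x r₁ ⊆ PB γ x r₂ := by
  have hwb := hγ.2.1
  have hr : 0 < min r₁ (r₂ - r₁) := lt_min h₁ (sub_pos.2 h₂)
  have hball : ∀ y ∈ PB γ x (min r₁ (r₂ - r₁)), PB γ y r₁ ⊆ PB γ x r₂ := by
    intro y hy z hz
    calc gnorm γ (mu r₂) (x - z) ≤ gnorm γ (mu r₂) (x - y) + gnorm γ (mu r₂) (y - z) :=
          gnorm_sub_le_add hwb x y z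
      _ < min r₁ (r₂ - r₁) + r₁ :=
          add_lt_add (gnorm_lt_of_mem_PB hwb hr ((min_le_left _ _).trans h₂.le) hy)
            (gnorm_lt_of_mem_PB hwb h₁ h₂.le hz)
      _ ≤ r₂ := by linarith [min_le_right r₁ (r₂ - r₁)]
  exact ⟨hball, hball x (self_mem_PB x hr)⟩
end

section
/- The topology τ_Γ induced on the Hahn field 𝓕 by any well-bounded partition Γ of ℚ is strictly coarser than the valuation (order) topology τ_v: every τ_Γ-open set is τ_v-open, and there exists a τ_v-open set (namely an interval (−d^n, d^n) for suitable n) that is not τ_Γ-open. -/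
open scoped Classical

/-- The valuation (order) topology `τ_v` on `𝓕`, given via the valuation balls:
a set is open iff around each of its points it contains a ball
`{y | |y − x|_u < e^{−n}} = {y | y = x ∨ λ(y − x) > n}`. -/
def TopV : Set (Set F) :=
  {O : Set F | ∀ x ∈ O, ∃ n : ℚ, {y : F | y = x ∨ (y - x ≠ 0 ∧ n < (y - x).order)} ⊆ O}

/-!
A `τ_Γ`-ball `PB γ x r` only constrains the coefficients of `x - y` on the finite union
`Γ_{μ(r)}` of pieces, which is again well-bounded. Such a set is bounded above, say by `M`,
so the valuation ball `{y | M < λ(y - x)}` lies inside `PB γ x r`. Conversely a well-bounded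
set contains no open interval, so `Γ_{μ(r)}` misses some `q ∈ (n - 1, n)`; then
`x + d^q = x + single q 1` lies in `PB γ x r` but not in the valuation ball `{y | n < λ(y - x)}`.
-/

lemma WellBoundedSet.union {A B : Set ℚ} (hA : WellBoundedSet A) (hB : WellBoundedSet B) :
    WellBoundedSet (A ∪ B) := by
  intro S hS hne
  rcases (S ∩ A).eq_empty_or_nonempty with hSA | hSA
  · exact hB S (fun s hs => (hS hs).resolve_left fun h => hSA.subset ⟨hs, h⟩) hne
  rcases (S ∩ B).eq_empty_or_nonempty with hSB | hSB
  · exact hA S (fun s hs => (hS hs).resolve_right fun h => hSB.subset ⟨hs, h⟩) hne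
  obtain ⟨a, ⟨haS, -⟩, ha⟩ := hA (S ∩ A) Set.inter_subset_right hSA
  obtain ⟨b, ⟨hbS, -⟩, hb⟩ := hB (S ∩ B) Set.inter_subset_right hSB
  refine ⟨max a b, (max_choice a b).elim (fun h => by rwa [h]) (fun h => by rwa [h]),
    fun s hs => ?_⟩
  rcases hS hs with h | h
  · exact (ha s ⟨hs, h⟩).trans (le_max_left a b)
  · exact (hb s ⟨hs, h⟩).trans (le_max_right a b)

lemma WellBoundedSet.bddAbove {A : Set ℚ} (hA : WellBoundedSet A) : BddAbove A := by
  rcases A.eq_empty_or_nonempty with rfl | hne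
  · exact bddAbove_empty
  · obtain ⟨m, -, hm⟩ := hA A subset_rfl hne
    exact ⟨m, hm⟩

lemma WellBoundedSet.not_Ioo_subset {A : Set ℚ} (hA : WellBoundedSet A) {a b : ℚ}
    (hab : a < b) : ¬ Set.Ioo a b ⊆ A := by
  intro hsub
  obtain ⟨m, ⟨ham, hmb⟩, hm⟩ := hA (Set.Ioo a b) hsub (Set.nonempty_Ioo.mpr hab)
  obtain ⟨c, hmc, hcb⟩ := exists_between hmb
  exact (hm c ⟨ham.trans hmc, hcb⟩).not_gt hmc

lemma wellBoundedSet_Gam {γ : ℕ → Set ℚ} (hγ : ∀ i, WellBoundedSet (γ i)) (n : ℕ) :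
    WellBoundedSet (Gam γ n) := by
  induction n with
  | zero => intro S hS ⟨s, hs⟩; simpa [Gam] using hS hs
  | succ n ih => rw [Gam, Set.biUnion_lt_succ]; exact ih.union (hγ n)

lemma gnorm_eq_zero_of_coeff_eq_zero {γ : ℕ → Set ℚ} {n : ℕ} {x : F}
    (h : ∀ q ∈ Gam γ n, x.coeff q = 0) : gnorm γ n x = 0 := by
  have himage : (fun q => |x.coeff q|) '' Gam γ n ⊆ {0} := by
    rintro _ ⟨q, hq, rfl⟩
    simp [h q hq]
  rw [gnorm, (Set.insert_subset (Set.mem_singleton 0) himage).antisymm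
    (Set.singleton_subset_iff.mpr (Set.mem_insert 0 _)), csSup_singleton]

lemma mem_PB_of_coeff_eq_zero {γ : ℕ → Set ℚ} {x y : F} {r : ℝ} (hr : 0 < r)
    (h : ∀ q ∈ Gam γ (mu r), (x - y).coeff q = 0) : y ∈ PB γ x r :=
  (gnorm_eq_zero_of_coeff_eq_zero h).trans_lt hr

lemma HahnSeries.coe_lt_orderTop_iff {Γ R : Type*} [LinearOrder Γ] [Zero Γ] [Zero R]
    {x : HahnSeries Γ R} {g : Γ} :
    (g : WithTop Γ) < x.orderTop ↔ x = 0 ∨ (x ≠ 0 ∧ g < x.order) := by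
  by_cases hx : x = 0
  · simp [hx]
  · simp [hx, ← order_eq_orderTop_of_ne_zero hx]

lemma mem_TopV_iff {O : Set F} :
    O ∈ TopV ↔ ∀ x ∈ O, ∃ n : ℚ, {y : F | (n : WithTop ℚ) < (y - x).orderTop} ⊆ O := by
  simp only [TopV, Set.mem_ofPred_eq, HahnSeries.coe_lt_orderTop_iff, sub_eq_zero]

lemma orderTop_ball_mem_TopV (x : F) (n : ℚ) :
    {y : F | (n : WithTop ℚ) < (y - x).orderTop} ∈ TopV := by
  refine mem_TopV_iff.mpr fun z hz => ⟨n, fun y hy => ?_⟩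
  calc (n : WithTop ℚ) < min (y - z).orderTop (z - x).orderTop := lt_min hy hz
    _ ≤ (y - z + (z - x)).orderTop := HahnSeries.min_orderTop_le_orderTop_add
    _ = (y - x).orderTop := by rw [sub_add_sub_cancel]

lemma Top'_subset_TopV {γ : ℕ → Set ℚ} (hγ : ∀ i, WellBoundedSet (γ i)) : Top' γ ⊆ TopV := by
  refine fun O hO => mem_TopV_iff.mpr fun x hx => ?_
  obtain ⟨r, hr, hPB⟩ := hO x hx
  obtain ⟨M, hM⟩ := (wellBoundedSet_Gam hγ (mu r)).bddAbove
  refine ⟨M, fun y hy => hPB (mem_PB_of_coeff_eq_zero hr fun q hq => ?_)⟩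
  have hqy : (q : WithTop ℚ) < (y - x).orderTop := (WithTop.coe_le_coe.mpr (hM hq)).trans_lt hy
  rw [← neg_sub, HahnSeries.coeff_neg, HahnSeries.coeff_eq_zero_of_lt_orderTop hqy, neg_zero]

lemma orderTop_ball_notMem_Top' {γ : ℕ → Set ℚ} (hγ : ∀ i, WellBoundedSet (γ i))
    (x : F) (n : ℚ) : {y : F | (n : WithTop ℚ) < (y - x).orderTop} ∉ Top' γ := by
  intro hO
  obtain ⟨r, hr, hPB⟩ := hO x (by simp)
  obtain ⟨q, ⟨-, hqn⟩, hqΓ⟩ :=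
    Set.not_subset.mp ((wellBoundedSet_Gam hγ (mu r)).not_Ioo_subset (sub_one_lt n))
  have hmem : x + HahnSeries.single q (1 : ℝ) ∈ PB γ x r :=
    mem_PB_of_coeff_eq_zero hr fun p hp => by
      rw [sub_add_cancel_left, HahnSeries.coeff_neg,
        HahnSeries.coeff_single_of_ne (ne_of_mem_of_not_mem hp hqΓ), neg_zero]
  have hlt := hPB hmem
  rw [Set.mem_ofPred_eq, add_sub_cancel_left, HahnSeries.orderTop_single one_ne_zero] at hlt
  exact hqn.not_gt (WithTop.coe_lt_coe.mp hlt)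

/-- `τ_Γ` is strictly coarser than the valuation topology `τ_v`: every
`τ_Γ`-open set is `τ_v`-open, and some `τ_v`-open set is not `τ_Γ`-open. -/
theorem TopGamma_strictly_coarser_than_valuation
    (γ : ℕ → Set ℚ) (hγ : IsWBPartition γ) :
    Top' γ ⊆ TopV ∧ ∃ O ∈ TopV, O ∉ Top' γ :=
  ⟨Top'_subset_TopV hγ.2.1,
    _, orderTop_ball_mem_TopV 0 0, orderTop_ball_notMem_Top' hγ.2.1 0 0⟩
end

section
/- Any two finite well-bounded partitions Γ and Ω of ℚ induce the same topology on the Hahn field 𝓕: τ_Γ = τ_Ω. Hence all finite well-bounded partitions induce a common 'weak topology' τ_w on 𝓕. -/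
open scoped Classical

lemma Gam_finite (γ : ℕ → Set ℚ) (hγ : IsFinWBPartition γ) (n : ℕ) :
    (Gam γ n).Finite := by
  have : Gam γ n = ⋃ i ∈ Finset.range n, γ i := by
    simp [Gam]
  rw [this]
  exact (Finset.range n).finite_toSet.biUnion (fun i _ => hγ.2 i)

lemma coeff_le_gnorm (γ : ℕ → Set ℚ) (hγ : IsFinWBPartition γ) (n : ℕ) (x : F)
    {q : ℚ} (hq : q ∈ Gam γ n) : |x.coeff q| ≤ gnorm γ n x := by
  apply le_csSup
  · exact ((Gam_finite γ hγ n).image _).insert 0 |>.bddAbove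
  · exact Set.mem_insert_of_mem _ ⟨q, hq, rfl⟩

lemma gnorm_lt (γ : ℕ → Set ℚ) (hγ : IsFinWBPartition γ) (n : ℕ) (x : F) {r : ℝ}
    (hr : 0 < r) (h : ∀ q ∈ Gam γ n, |x.coeff q| < r) : gnorm γ n x < r := by
  have hfin : (insert (0:ℝ) ((fun q => |x.coeff q|) '' Gam γ n)).Finite :=
    ((Gam_finite γ hγ n).image _).insert 0
  have hne : (insert (0:ℝ) ((fun q => |x.coeff q|) '' Gam γ n)).Nonempty :=
    ⟨0, Set.mem_insert _ _⟩
  have := hne.csSup_mem hfin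
  rcases this with h0 | ⟨q, hq, hqe⟩
  · rw [gnorm, h0]; exact hr
  · rw [gnorm, ← hqe]; exact h q hq

lemma Top'_subset (γ Ω : ℕ → Set ℚ) (hγ : IsFinWBPartition γ)
    (hΩ : IsFinWBPartition Ω) : Top' γ ⊆ Top' Ω := by
  intro O hO x hx
  obtain ⟨r, hr, hball⟩ := hO x hx
  -- every q in the finite set Gam γ (mu r) lies in some Ω i
  have hcov : ∀ q : ℚ, ∃ i, q ∈ Ω i := by
    intro q
    have := hΩ.1.2.2
    have : q ∈ ⋃ i, Ω i := by rw [this]; trivial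
    simpa using this
  have hfin := Gam_finite γ hγ (mu r)
  -- choose N bounding the indices
  obtain ⟨N, hN⟩ : ∃ N, Gam γ (mu r) ⊆ Gam Ω N := by
    classical
    choose f hf using hcov
    rcases hfin.exists_finset_coe with ⟨s, hs⟩
    refine ⟨(s.image f).sup id + 1, ?_⟩
    intro q hq
    have hqs : q ∈ s := by rw [← hs] at hq; exact_mod_cast hq
    have : f q ≤ (s.image f).sup id := Finset.le_sup (f := id) (Finset.mem_image_of_mem f hqs)
    exact Set.mem_biUnion (Nat.lt_succ_of_le this) (hf q)
  set r' : ℝ := min r (1 / (N + 1)) with hr'def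
  have hr'pos : 0 < r' := lt_min hr (by positivity)
  refine ⟨r', hr'pos, fun y hy => hball ?_⟩
  have hNmu : N < mu r' := by
    rw [mu, Nat.lt_ceil]
    have h1 : r' ≤ 1 / (N + 1) := min_le_right _ _
    have : ((N:ℝ) + 1) ≤ 1 / r' := by
      calc ((N:ℝ) + 1) = 1 / (1 / (N + 1)) := by rw [one_div_one_div]
        _ ≤ 1 / r' := one_div_le_one_div_of_le hr'pos h1
    linarith
  have hsub : Gam γ (mu r) ⊆ Gam Ω (mu r') := by
    intro q hq
    obtain ⟨i, hi, hqi⟩ := Set.mem_iUnion₂.mp (hN hq)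
    exact Set.mem_biUnion (hi.trans hNmu) hqi
  apply gnorm_lt γ hγ _ _ hr
  intro q hq
  calc |(x - y).coeff q| ≤ gnorm Ω (mu r') (x - y) := coeff_le_gnorm Ω hΩ _ _ (hsub hq)
    _ < r' := hy
    _ ≤ r := min_le_left _ _

/-- Any two finite well-bounded partitions of `ℚ` induce the same topology on
the Hahn field `𝓕`; this common topology is the weak topology `τ_w`. -/
theorem finite_partitions_same_topology
    (γ Ω : ℕ → Set ℚ) (hγ : IsFinWBPartition γ) (hΩ : IsFinWBPartition Ω) :
    Top' γ = Top' Ω :=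
  le_antisymm (Top'_subset γ Ω hγ hΩ) (Top'_subset Ω γ hΩ hγ)
end

section
/- Let (a_n) be a regular sequence in the Hahn field 𝓕 with limsup_{n→∞}(−λ(a_n)/n) = 0, let S = ∪_n supp(a_n), and let r = 1 / sup{limsup_{n→∞} |a_n[q]|^{1/n} : q ∈ S}. Then for x ∈ 𝓕 with λ(x) ≥ 0, the power series Σ_{n=0}^∞ a_n x^n converges absolutely in (𝓕, τ_w) if |x[0]| < r, and diverges in (𝓕, τ_w) if |x[0]| > r. -/
open scoped Classical

/-- A subset `A` of `ℚ` is well-ordered if every nonempty subset of `A`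
has a minimum element. -/
def WellOrderedSet (A : Set ℚ) : Prop :=
  ∀ S ⊆ A, S.Nonempty → ∃ m ∈ S, ∀ a ∈ S, m ≤ a

/-- Convergence of a sequence in `𝓕` in the weak topology `τ_w` (induced by a
finite well-bounded partition `γ`). -/
def WeakConvTo (γ : ℕ → Set ℚ) (s : ℕ → F) (l : F) : Prop :=
  ∀ ε : ℝ, 0 < ε → ∃ N : ℕ, ∀ n ≥ N, gnorm γ (mu ε) (s n - l) < ε

/-- `x` is positive in the ordered Hahn field: `x ≠ 0` and `x[λ(x)] > 0`. -/
noncomputable def FPos (x : F) : Prop := x ≠ 0 ∧ 0 < x.coeff x.order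

/-- The order `x ≤ y` on the Hahn field. -/
noncomputable def FLe (x y : F) : Prop := x = y ∨ FPos (y - x)

/-- The absolute value on the ordered Hahn field. -/
noncomputable def Fabs (x : F) : F := if FLe 0 x then x else -x

/-!
Convergence in `τ_w` is coefficientwise convergence, because the pieces of a finite
well-bounded partition are finite and exhaust `ℚ`. Since `λ(x) ≥ 0` we can write
`x = x[0] + y` with `supp y > 0`; for fixed `u` only boundedly many powers of `y` reach the
coefficient `x ^ n [u]`, so `|x ^ n [u]|` is at most polynomial in `n` times `|x[0]| ^ n`.
The coefficient of `a n * x ^ n` at `q` is a sum over one finite set of pairs `(p, p')` with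
`p ∈ S` and `p + p' = q`, independent of `n`. If `|x[0]| < r` each of these terms is dominated
by a convergent geometric series. If the series converges, its terms tend to `0`
coefficientwise, and well-founded induction over `S` yields
`limsup |a n [s]| ^ (1 / n) ≤ 1 / |x[0]|` for every `s ∈ S`, i.e. `|x[0]| ≤ r`.
-/

open Filter Topology
open scoped Pointwise

section ExpGrowth

def ExpGrowthLE (b : ℕ → ℝ) (r : ℝ) : Prop :=
  ∀ ρ > r, ∀ᶠ n in atTop, |b n| ≤ ρ ^ n

lemma eventually_mul_pow_mul_pow_le {t σ : ℝ} (ht : 0 ≤ t) (hσ : t < σ) (C : ℝ) (K : ℕ) :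
    ∀ᶠ n : ℕ in atTop, C * (n : ℝ) ^ K * t ^ n ≤ σ ^ n := by
  have hσ0 : 0 < σ := ht.trans_lt hσ
  have hratio : |t / σ| < 1 := by
    rw [abs_of_nonneg (by positivity)]
    exact (div_lt_one hσ0).2 hσ
  have hlim := (tendsto_pow_const_mul_const_pow_of_abs_lt_one K hratio).const_mul C
  rw [mul_zero] at hlim
  filter_upwards [hlim.eventually (ge_mem_nhds one_pos)] with n hn
  rw [div_pow, ← mul_assoc, mul_div_assoc', div_le_one (by positivity)] at hn
  exact hn

namespace ExpGrowthLE

variable {b d : ℕ → ℝ} {r : ℝ}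

lemma of_abs_le (h : ExpGrowthLE b r) (hdb : ∀ᶠ n in atTop, |d n| ≤ |b n|) :
    ExpGrowthLE d r := fun ρ hρ => by
  filter_upwards [h ρ hρ, hdb] with n h1 h2 using h2.trans h1

lemma of_le_mul_pow {t C : ℝ} {K : ℕ} (ht : 0 ≤ t)
    (h : ∀ᶠ n in atTop, |b n| ≤ C * (n : ℝ) ^ K * t ^ n) :
    ExpGrowthLE b t := fun σ hσ => by
  filter_upwards [h, eventually_mul_pow_mul_pow_le ht hσ C K] with n h1 h2 using h1.trans h2

lemma of_tendsto {c : ℝ} (h : Tendsto b atTop (𝓝 c)) : ExpGrowthLE b 1 :=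
  of_le_mul_pow (C := |c| + 1) (K := 0) zero_le_one <| by
    filter_upwards [h.abs.eventually (gt_mem_nhds (lt_add_one |c|))] with n hn
    simpa using hn.le

lemma add (hr : 0 ≤ r) (hb : ExpGrowthLE b r) (hd : ExpGrowthLE d r) :
    ExpGrowthLE (fun n => b n + d n) r := fun ρ hρ => by
  obtain ⟨ρ', hrρ', hρ'ρ⟩ := exists_between hρ
  filter_upwards [hb ρ' hrρ', hd ρ' hrρ',
    eventually_mul_pow_mul_pow_le (hr.trans hrρ'.le) hρ'ρ 2 0] with n h1 h2 h3
  calc |b n + d n| ≤ |b n| + |d n| := abs_add_le _ _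
    _ ≤ 2 * (n : ℝ) ^ 0 * ρ' ^ n := by linarith
    _ ≤ ρ ^ n := h3

lemma sub (hr : 0 ≤ r) (hb : ExpGrowthLE b r) (hd : ExpGrowthLE d r) :
    ExpGrowthLE (fun n => b n - d n) r := by
  simpa only [sub_eq_add_neg] using
    hb.add hr (hd.of_abs_le (Eventually.of_forall fun n => (abs_neg (d n)).le))

lemma sum {ι : Type*} (s : Finset ι) {f : ι → ℕ → ℝ} (hr : 0 ≤ r)
    (h : ∀ i ∈ s, ExpGrowthLE (f i) r) : ExpGrowthLE (fun n => ∑ i ∈ s, f i n) r := by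
  induction s using Finset.cons_induction with
  | empty =>
    intro ρ hρ
    filter_upwards with n
    simpa using pow_nonneg (hr.trans hρ.le) n
  | cons i s hi ih =>
    simp only [Finset.sum_cons]
    exact (h i (Finset.mem_cons_self i s)).add hr
      (ih fun j hj => h j (Finset.mem_cons_of_mem hj))

lemma mul {r₁ r₂ : ℝ} (hr₁ : 0 ≤ r₁) (hr₂ : 0 ≤ r₂) (hb : ExpGrowthLE b r₁)
    (hd : ExpGrowthLE d r₂) : ExpGrowthLE (fun n => b n * d n) (r₁ * r₂) := fun ρ hρ => by
  obtain ⟨δ, hδρ, hδ⟩ : ∃ δ, (r₁ + δ) * (r₂ + δ) < ρ ∧ 0 < δ := by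
    have hcont :
        Tendsto (fun δ => (r₁ + δ) * (r₂ + δ)) (𝓝[>] 0) (𝓝 (r₁ * r₂)) := by
      have hc : Continuous fun δ : ℝ => (r₁ + δ) * (r₂ + δ) := by fun_prop
      simpa using (hc.tendsto 0).mono_left nhdsWithin_le_nhds
    exact ((hcont.eventually (gt_mem_nhds hρ)).and self_mem_nhdsWithin).exists
  filter_upwards [hb _ (lt_add_of_pos_right r₁ hδ), hd _ (lt_add_of_pos_right r₂ hδ)]
    with n h1 h2
  calc |b n * d n| ≤ (r₁ + δ) ^ n * (r₂ + δ) ^ n := by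
        rw [abs_mul]; exact mul_le_mul h1 h2 (abs_nonneg _) (by positivity)
    _ = ((r₁ + δ) * (r₂ + δ)) ^ n := (mul_pow _ _ _).symm
    _ ≤ ρ ^ n := pow_le_pow_left₀ (by positivity) hδρ.le n

lemma of_mul_pow {c : ℝ} (hc : c ≠ 0) (h : ExpGrowthLE (fun n => b n * c ^ n) 1) :
    ExpGrowthLE b |c|⁻¹ := fun ρ hρ => by
  have hc' : 0 < |c| := abs_pos.2 hc
  have hρc : 1 < ρ * |c| := by rwa [gt_iff_lt, inv_lt_iff_one_lt_mul₀ hc'] at hρ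
  filter_upwards [h _ hρc] with n hn
  rw [abs_mul, abs_pow, mul_pow] at hn
  exact le_of_mul_le_mul_right hn (pow_pos hc' n)

lemma summable_abs (hr : r < 1) (h : ExpGrowthLE b r) : Summable fun n => |b n| := by
  obtain ⟨ρ, hρ, hρ1⟩ := exists_between (max_lt hr one_pos)
  refine Summable.of_norm_bounded_eventually
    (summable_geometric_of_lt_one ((le_max_right r 0).trans hρ.le) hρ1) ?_
  rw [Nat.cofinite_eq_atTop]
  filter_upwards [h ρ ((le_max_left r 0).trans_lt hρ)] with n hn
  simpa using hn

end ExpGrowthLE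

noncomputable def rootLimsup (b : ℕ → ℝ) : ENNReal :=
  atTop.limsup fun n => ENNReal.ofReal (|b n| ^ ((n : ℝ)⁻¹))

lemma rootLimsup_le_ofReal_iff {b : ℕ → ℝ} {r : ℝ} (hr : 0 ≤ r) :
    rootLimsup b ≤ ENNReal.ofReal r ↔ ExpGrowthLE b r := by
  constructor
  · intro h ρ hρ
    have hρ0 : 0 < ρ := hr.trans_lt hρ
    have hlt : rootLimsup b < ENNReal.ofReal ρ :=
      h.trans_lt ((ENNReal.ofReal_lt_ofReal_iff hρ0).2 hρ)
    filter_upwards [eventually_lt_of_limsup_lt hlt, eventually_ge_atTop 1] with n hn hn1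
    calc |b n| = (|b n| ^ ((n : ℝ)⁻¹)) ^ n :=
          (Real.rpow_inv_natCast_pow (abs_nonneg _) (by omega)).symm
      _ ≤ ρ ^ n :=
          pow_le_pow_left₀ (by positivity) ((ENNReal.ofReal_lt_ofReal_iff hρ0).1 hn).le n
  · intro h
    refine le_of_forall_gt_imp_ge_of_dense fun e he => ?_
    rcases eq_or_ne e ⊤ with rfl | het
    · exact le_top
    rw [← ENNReal.ofReal_toReal het]
    refine limsup_le_of_le (by isBoundedDefault) ?_
    filter_upwards [h _ ((ENNReal.ofReal_lt_iff_lt_toReal hr het).1 he), eventually_ge_atTop 1]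
      with n hn hn1
    refine ENNReal.ofReal_le_ofReal ?_
    calc |b n| ^ ((n : ℝ)⁻¹) ≤ (e.toReal ^ n) ^ ((n : ℝ)⁻¹) :=
          Real.rpow_le_rpow (abs_nonneg _) hn (by positivity)
      _ = e.toReal := Real.pow_rpow_inv_natCast ENNReal.toReal_nonneg (by omega)

end ExpGrowth

namespace IsFinWBPartition

variable {γ : ℕ → Set ℚ}

lemma finite_gam (hγ : IsFinWBPartition γ) (n : ℕ) : (Gam γ n).Finite :=
  Set.Finite.biUnion (Set.finite_Iio n) fun i _ => hγ.2 i

lemma abs_coeff_le_gnorm (hγ : IsFinWBPartition γ) {n : ℕ} {q : ℚ} (hq : q ∈ Gam γ n)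
    (z : F) : |z.coeff q| ≤ gnorm γ n z :=
  le_csSup (((hγ.finite_gam n).image _).insert 0).bddAbove
    (Set.mem_insert_of_mem _ ⟨q, hq, rfl⟩)

lemma gnorm_lt (hγ : IsFinWBPartition γ) {n : ℕ} {z : F} {ε : ℝ} (hε : 0 < ε)
    (h : ∀ q ∈ Gam γ n, |z.coeff q| < ε) : gnorm γ n z < ε := by
  have hfin := ((hγ.finite_gam n).image fun q => |z.coeff q|).insert 0
  rcases (Set.insert_nonempty _ _).csSup_mem hfin with h0 | ⟨q, hq, hqz⟩
  · rw [gnorm, h0]; exact hε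
  · rw [gnorm, ← hqz]; exact h q hq

lemma weakConvTo_iff (hγ : IsFinWBPartition γ) {s : ℕ → F} {l : F} :
    WeakConvTo γ s l ↔ ∀ q, Tendsto (fun m => (s m).coeff q) atTop (𝓝 (l.coeff q)) := by
  constructor
  · intro h q
    obtain ⟨i, hi⟩ := Set.mem_iUnion.1 (hγ.1.2.2 ▸ Set.mem_univ q)
    rw [Metric.tendsto_atTop]
    intro ε hε
    set ε' := min ε (i + 1 : ℝ)⁻¹
    have hε' : 0 < ε' := lt_min hε (by positivity)
    -- `ε' ≤ 1 / (i + 1)` makes `Gam γ (mu ε')` contain `γ i`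
    have hq : q ∈ Gam γ (mu ε') := by
      refine Set.mem_biUnion (Nat.lt_ceil.2 ?_) hi
      calc (i : ℝ) < i + 1 := lt_add_one _
        _ ≤ 1 / ε' := by
          rw [one_div, le_inv_comm₀ (by positivity) hε']; exact min_le_right _ _
    obtain ⟨N, hN⟩ := h ε' hε'
    refine ⟨N, fun m hm => ?_⟩
    have := (hγ.abs_coeff_le_gnorm hq (s m - l)).trans_lt (hN m hm)
    rw [HahnSeries.coeff_sub] at this
    exact this.trans_le (min_le_left _ _)
  · intro h ε hε
    have hall := (hγ.finite_gam (mu ε)).eventually_all.2 fun q _ =>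
      (h q).sub_const (l.coeff q) |>.abs.eventually (gt_mem_nhds (by simpa using hε))
    obtain ⟨N, hN⟩ := eventually_atTop.1 hall
    exact ⟨N, fun m hm => hγ.gnorm_lt hε fun q hq => by simpa using hN m hm q hq⟩

lemma exists_weakConvTo_of_summable (hγ : IsFinWBPartition γ) {z : ℕ → F} {W : Set ℚ}
    (hW : W.IsPWO) (hzW : ∀ n, (z n).support ⊆ W)
    (hsum : ∀ q, Summable fun n => (z n).coeff q) :
    ∃ l : F, WeakConvTo γ (fun m => ∑ n ∈ Finset.range (m + 1), z n) l := by
  let l : F := ⟨fun q => ∑' n, (z n).coeff q, hW.mono fun q hq => by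
    by_contra hqW
    exact hq (by simp [fun n => Function.notMem_support.1 fun h => hqW (hzW n h)])⟩
  refine ⟨l, hγ.weakConvTo_iff.2 fun q => ?_⟩
  refine ((hsum q).hasSum.tendsto_sum_nat.comp (tendsto_add_atTop_nat 1)).congr fun m => ?_
  simp [HahnSeries.coeff_sum]

lemma tendsto_coeff_zero_of_weakConvTo (hγ : IsFinWBPartition γ) {z : ℕ → F} {l : F}
    (h : WeakConvTo γ (fun m => ∑ n ∈ Finset.range (m + 1), z n) l) (q : ℚ) :
    Tendsto (fun n => (z n).coeff q) atTop (𝓝 0) := by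
  have hsucc := hγ.weakConvTo_iff.1 h q
  simp only [HahnSeries.coeff_sum] at hsucc
  have hpartial : Tendsto (fun m => ∑ n ∈ Finset.range m, (z n).coeff q) atTop
      (𝓝 (l.coeff q)) := (tendsto_add_atTop_iff_nat 1).1 hsucc
  simpa [Finset.sum_range_succ_sub_sum] using hsucc.sub hpartial

end IsFinWBPartition

lemma WellOrderedSet.isWF {A : Set ℚ} (h : WellOrderedSet A) : A.IsWF := by
  rw [Set.isWF_iff_no_descending_seq]
  rintro f hf hfA
  obtain ⟨m, ⟨n, rfl⟩, hmin⟩ := h (Set.range f) (Set.range_subset_iff.2 hfA)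
    (Set.range_nonempty f)
  exact (hmin _ (Set.mem_range_self (n + 1))).not_gt (hf n.lt_succ_self)

lemma fabs_eq_or_eq_neg (z : F) : Fabs z = z ∨ Fabs z = -z := by
  unfold Fabs
  split_ifs <;> simp

lemma support_fabs (z : F) : (Fabs z).support = z.support := by
  rcases fabs_eq_or_eq_neg z with h | h <;> rw [h]
  exact HahnSeries.support_neg

lemma abs_coeff_fabs (z : F) (q : ℚ) : |(Fabs z).coeff q| = |z.coeff q| := by
  rcases fabs_eq_or_eq_neg z with h | h <;> simp [h]

namespace HahnSeries

section OrderedMonoid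

variable {Γ R : Type*} [AddCommMonoid Γ] [PartialOrder Γ] [IsOrderedCancelAddMonoid Γ]

lemma coeff_mul_eq_sum_antidiagonal [NonUnitalNonAssocSemiring R] {s t : Set Γ}
    (hs : s.IsPWO) (ht : t.IsPWO) {x y : HahnSeries Γ R} (hx : x.support ⊆ s)
    (hy : y.support ⊆ t) (a : Γ) :
    (x * y).coeff a = ∑ p ∈ Finset.antidiagonal hs ht a, x.coeff p.1 * y.coeff p.2 := by
  rw [coeff_mul_left' hs hx]
  refine Finset.sum_subset (Finset.antidiagonal_mono_right hy) fun p hp hp' => ?_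
  rw [Finset.mem_antidiagonal] at hp hp'
  have : y.coeff p.2 = 0 := by_contra fun h => hp' ⟨hp.1, h, hp.2.2⟩
  rw [this, mul_zero]

lemma coeff_add_C_pow [CommRing R] (y : HahnSeries Γ R) (c : R) (n : ℕ) (u : Γ) :
    ((y + C c) ^ n).coeff u =
      ∑ k ∈ Finset.range (n + 1), (y ^ k).coeff u * c ^ (n - k) * n.choose k := by
  rw [add_pow, coeff_sum]
  refine Finset.sum_congr rfl fun k _ => ?_
  rw [← map_pow, ← map_natCast (C : R →+* HahnSeries Γ R), mul_assoc, ← map_mul, C_apply,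
    coeff_mul_single_zero, mul_assoc]

end OrderedMonoid

section LinearOrder

variable {Γ R : Type*} [AddCommMonoid Γ] [LinearOrder Γ] [IsOrderedCancelAddMonoid Γ]
  [Semiring R] [NoZeroDivisors R] {x : HahnSeries Γ R}

lemma nonneg_of_mem_support_pow (hx : 0 ≤ x.order) {n : ℕ} {q : Γ}
    (hq : q ∈ (x ^ n).support) : 0 ≤ q :=
  (nsmul_nonneg hx n).trans (order_pow x n ▸ order_le_of_coeff_ne_zero hq)

lemma coeff_pow_zero_of_nonneg_order (hx : 0 ≤ x.order) (n : ℕ) :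
    (x ^ n).coeff 0 = x.coeff 0 ^ n := by
  rcases hx.eq_or_lt with h | h
  · induction n with
    | zero => simp
    | succ n ih =>
      calc (x ^ (n + 1)).coeff 0 = (x ^ n * x).coeff ((x ^ n).order + x.order) := by
            rw [pow_succ, order_pow, ← h, nsmul_zero, add_zero]
        _ = x.coeff 0 ^ (n + 1) := by
            rw [coeff_mul_order_add_order, leadingCoeff_eq, leadingCoeff_eq, order_pow, ← h,
              nsmul_zero, ih, pow_succ]
  · rw [coeff_eq_zero_of_lt_order h]
    rcases n with _ | n
    · simp
    · rw [coeff_eq_zero_of_lt_order (by rw [order_pow]; exact nsmul_pos h n.succ_ne_zero),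
        zero_pow n.succ_ne_zero]

lemma exists_coeff_pow_eq_zero [Archimedean Γ] (hx : ∀ q ∈ x.support, 0 < q) (u : Γ) :
    ∃ K : ℕ, ∀ k, K < k → (x ^ k).coeff u = 0 := by
  rcases eq_or_ne x 0 with rfl | hx0
  · exact ⟨0, fun k hk => by simp [zero_pow (Nat.pos_iff_ne_zero.1 hk)]⟩
  have hd : 0 < x.order := hx _ (mt coeff_order_eq_zero.1 hx0)
  obtain ⟨K, hK⟩ := Archimedean.arch u hd
  exact ⟨K, fun k hk => coeff_eq_zero_of_lt_order <| by
    rw [order_pow]; exact hK.trans_lt (nsmul_lt_nsmul_left hd hk)⟩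

end LinearOrder

end HahnSeries

lemma exists_abs_coeff_pow_le {x : F} (hx : 0 ≤ x.order) (u : ℚ) :
    ∃ (B : ℝ) (K : ℕ), ∀ᶠ n : ℕ in atTop,
      |(x ^ n).coeff u| ≤ B * (n : ℝ) ^ K * |x.coeff 0| ^ n := by
  set c := x.coeff 0
  set y := x - HahnSeries.C c with hy
  have hypos : ∀ q ∈ y.support, 0 < q := by
    intro q hq
    rcases eq_or_ne q 0 with rfl | hq0
    · exact absurd (by simp [hy, c, HahnSeries.C_apply]) hq
    · have : x.coeff q ≠ 0 := by
        simpa [hy, HahnSeries.C_apply, HahnSeries.coeff_single_of_ne hq0] using hq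
      exact (hx.trans (HahnSeries.order_le_of_coeff_ne_zero this)).lt_of_ne' hq0
  obtain ⟨K, hK⟩ := HahnSeries.exists_coeff_pow_eq_zero hypos u
  refine ⟨∑ k ∈ Finset.range (K + 1), |(y ^ k).coeff u| * (|c| ^ k)⁻¹, K, ?_⟩
  filter_upwards [eventually_gt_atTop K] with n hn
  have hsum : (x ^ n).coeff u =
      ∑ k ∈ Finset.range (K + 1), (y ^ k).coeff u * c ^ (n - k) * n.choose k := by
    rw [← sub_add_cancel x (HahnSeries.C c), HahnSeries.coeff_add_C_pow]
    refine (Finset.sum_subset (Finset.range_subset_range.2 (by omega)) fun k _ hkK => ?_).symm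
    rw [hK k (by simpa using hkK), zero_mul, zero_mul]
  rw [hsum, Finset.sum_mul, Finset.sum_mul]
  refine (Finset.abs_sum_le_sum_abs _ _).trans (Finset.sum_le_sum fun k hk => ?_)
  have hkn : k < n := by rw [Finset.mem_range] at hk; omega
  have hchoose : (n.choose k : ℝ) ≤ (n : ℝ) ^ K := by
    calc (n.choose k : ℝ) ≤ (n : ℝ) ^ k := by exact_mod_cast Nat.choose_le_pow n k
      _ ≤ (n : ℝ) ^ K := pow_le_pow_right₀ (by exact_mod_cast (by omega : 1 ≤ n))
          (by rw [Finset.mem_range] at hk; omega)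
  -- for `c = 0` both sides vanish, thanks to `0⁻¹ = 0` and `k < n`
  have hpow : |c| ^ (n - k) = (|c| ^ k)⁻¹ * |c| ^ n := by
    rcases eq_or_ne c 0 with h0 | h0
    · simp [h0, zero_pow (by omega : n - k ≠ 0), zero_pow (by omega : n ≠ 0)]
    · rw [pow_sub₀ _ (abs_pos.2 h0).ne' hkn.le]; ring
  rw [abs_mul, abs_mul, abs_pow, Nat.abs_cast, hpow]
  calc |(y ^ k).coeff u| * ((|c| ^ k)⁻¹ * |c| ^ n) * n.choose k
      ≤ |(y ^ k).coeff u| * ((|c| ^ k)⁻¹ * |c| ^ n) * (n : ℝ) ^ K := by gcongr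
    _ = |(y ^ k).coeff u| * (|c| ^ k)⁻¹ * (n : ℝ) ^ K * |c| ^ n := by ring

lemma expGrowthLE_coeff_pow {x : F} (hx : 0 ≤ x.order) (u : ℚ) :
    ExpGrowthLE (fun n => (x ^ n).coeff u) |x.coeff 0| :=
  let ⟨_, _, h⟩ := exists_abs_coeff_pow_le hx u
  ExpGrowthLE.of_le_mul_pow (abs_nonneg _) h

section PowerSeries

variable {a : ℕ → F} {x : F} {S : Set ℚ}

lemma summable_abs_coeff_mul_pow (hS : S.IsPWO) (haS : ∀ n, (a n).support ⊆ S)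
    (hx : 0 ≤ x.order)
    (h : ENNReal.ofReal |x.coeff 0| < (⨆ q ∈ S, rootLimsup fun n => (a n).coeff q)⁻¹)
    (q : ℚ) :
    Summable fun n => |(a n * x ^ n).coeff q| := by
  have hT := HahnSeries.SummableFamily.isPWO_iUnion_support_powers hx
  obtain ⟨ρ, hρ0, hMρ, hρt⟩ :=
    ENNReal.lt_iff_exists_real_btwn.1 (ENNReal.lt_inv_iff_lt_inv.1 h)
  have hρt1 : ρ * |x.coeff 0| < 1 := by
    have := ENNReal.mul_lt_of_lt_div (by rwa [ENNReal.div_eq_inv_mul, mul_one])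
    rwa [← ENNReal.ofReal_mul hρ0, ENNReal.ofReal_lt_one] at this
  refine ExpGrowthLE.summable_abs hρt1 ?_
  simp only [fun n => HahnSeries.coeff_mul_eq_sum_antidiagonal hS hT (haS n)
    (Set.subset_iUnion (fun n => (x ^ n).support) n) q]
  refine ExpGrowthLE.sum _ (by positivity) fun p hp => ?_
  have hL : rootLimsup (fun n => (a n).coeff p.1) ≤ ENNReal.ofReal ρ :=
    (le_iSup₂ (f := fun q (_ : q ∈ S) => rootLimsup fun n => (a n).coeff q) p.1
      (Finset.mem_antidiagonal.1 hp).1).trans hMρ.le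
  exact ((rootLimsup_le_ofReal_iff hρ0).1 hL).mul hρ0 (abs_nonneg _)
    (expGrowthLE_coeff_pow hx p.2)

/-- Regularity makes the root-test bound an induction over the well-ordered set `S`:
in the coefficient of `a n * x ^ n` at `s`, every term other than `a n [s] * x[0] ^ n`
involves some `a n [p]` with `p < s`. -/
lemma rootLimsup_coeff_le (hS : S.IsWF) (haS : ∀ n, (a n).support ⊆ S) (hx : 0 ≤ x.order)
    (hc : x.coeff 0 ≠ 0) (hterm : ∀ q, Tendsto (fun n => (a n * x ^ n).coeff q) atTop (𝓝 0))
    {s : ℚ} (hs : s ∈ S) :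
    rootLimsup (fun n => (a n).coeff s) ≤ ENNReal.ofReal |x.coeff 0|⁻¹ := by
  have hT := HahnSeries.SummableFamily.isPWO_iUnion_support_powers hx
  have ht : 0 < |x.coeff 0| := abs_pos.2 hc
  refine Set.WellFoundedOn.induction (P := fun s => rootLimsup (fun n => (a n).coeff s) ≤ _)
    hS hs fun s hs ih => ?_
  rw [rootLimsup_le_ofReal_iff (by positivity)]
  refine ExpGrowthLE.of_mul_pow hc ?_
  set D := Finset.antidiagonal hS.isPWO hT s
  have hsD : (s, 0) ∈ D := Finset.mem_antidiagonal.2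
    ⟨hs, Set.mem_iUnion.2 ⟨0, by simp⟩, add_zero s⟩
  have hsplit : ∀ n, (a n).coeff s * x.coeff 0 ^ n = (a n * x ^ n).coeff s -
      ∑ p ∈ D.erase (s, 0), (a n).coeff p.1 * (x ^ n).coeff p.2 := fun n => by
    rw [HahnSeries.coeff_mul_eq_sum_antidiagonal hS.isPWO hT (haS n)
      (Set.subset_iUnion (fun n => (x ^ n).support) n), ← Finset.add_sum_erase _ _ hsD,
      HahnSeries.coeff_pow_zero_of_nonneg_order hx]
    ring
  simp only [hsplit]
  refine (ExpGrowthLE.of_tendsto (hterm s)).sub zero_le_one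
    (ExpGrowthLE.sum _ zero_le_one fun p hp => ?_)
  obtain ⟨hps, hpD⟩ := Finset.mem_erase.1 hp
  obtain ⟨hp1, hp2, hpsum⟩ := Finset.mem_antidiagonal.1 hpD
  obtain ⟨m, hm⟩ := Set.mem_iUnion.1 hp2
  have hp2pos : 0 < p.2 := (HahnSeries.nonneg_of_mem_support_pow hx hm).lt_of_ne' fun h =>
    hps (Prod.ext (by rw [← hpsum, h, add_zero]) h)
  have ha := (rootLimsup_le_ofReal_iff (by positivity)).1 (ih p.1 hp1 (by linarith))
  simpa [inv_mul_cancel₀ ht.ne'] using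
    ha.mul (by positivity) (abs_nonneg _) (expGrowthLE_coeff_pow hx p.2)

end PowerSeries

theorem power_series_weak_convergence_general (γ : ℕ → Set ℚ) (hγ : IsFinWBPartition γ)
    (a : ℕ → F)
    (hreg : WellOrderedSet (⋃ n, (a n).support))
    (x : F) (hx : x = 0 ∨ 0 ≤ x.order) :
    (ENNReal.ofReal |x.coeff 0| <
        (⨆ q ∈ ⋃ n, (a n).support,
          Filter.atTop.limsup fun n : ℕ =>
            ENNReal.ofReal (|(a n).coeff q| ^ ((n : ℝ)⁻¹)))⁻¹ →
      (∃ l : F, WeakConvTo γ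
          (fun m => ∑ n ∈ Finset.range (m + 1), Fabs (a n * x ^ n)) l) ∧
      ∃ l : F, WeakConvTo γ
          (fun m => ∑ n ∈ Finset.range (m + 1), a n * x ^ n) l) ∧
    ((⨆ q ∈ ⋃ n, (a n).support,
          Filter.atTop.limsup fun n : ℕ =>
            ENNReal.ofReal (|(a n).coeff q| ^ ((n : ℝ)⁻¹)))⁻¹ <
        ENNReal.ofReal |x.coeff 0| →
      ¬ ∃ l : F, WeakConvTo γ
          (fun m => ∑ n ∈ Finset.range (m + 1), a n * x ^ n) l) := by
  have hx0 : 0 ≤ x.order := hx.elim (fun h => h ▸ HahnSeries.order_zero.ge) id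
  have hS := hreg.isWF
  have haS : ∀ n, (a n).support ⊆ ⋃ n, (a n).support := Set.subset_iUnion _
  have hW := hS.isPWO.add (HahnSeries.SummableFamily.isPWO_iUnion_support_powers hx0)
  have hzW : ∀ n, (a n * x ^ n).support ⊆ (⋃ n, (a n).support) + ⋃ n, (x ^ n).support :=
    fun n => HahnSeries.support_mul_subset.trans
      (Set.add_subset_add (haS n) (Set.subset_iUnion (fun n => (x ^ n).support) n))
  refine ⟨fun hlt => ?_, fun hgt ⟨l, hl⟩ => ?_⟩
  · have habs := summable_abs_coeff_mul_pow hS.isPWO haS hx0 hlt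
    refine ⟨hγ.exists_weakConvTo_of_summable hW (fun n => ?_) fun q => ?_,
      hγ.exists_weakConvTo_of_summable hW hzW fun q => (habs q).of_abs⟩
    · rw [support_fabs]; exact hzW n
    · exact ((habs q).congr fun n => (abs_coeff_fabs _ q).symm).of_abs
  · have ht : 0 < |x.coeff 0| := ENNReal.ofReal_pos.1 (zero_le.trans_lt hgt)
    refine hgt.not_ge (ENNReal.le_inv_iff_le_inv.1 ?_)
    rw [← ENNReal.ofReal_inv_of_pos ht]
    exact iSup₂_le fun s hs => rootLimsup_coeff_le hS haS hx0 (abs_pos.1 ht)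
      (hγ.tendsto_coeff_zero_of_weakConvTo hl) hs

/-- Convergence criterion for power series in `(𝓕, τ_w)`: let `(a_n)` be a
regular sequence with `limsup (−λ(a_n)/n) = 0`, let
`r = 1 / sup {limsup |a_n[q]|^{1/n} : q ∈ S}` where `S = ⋃_n supp a_n`, and let
`x ∈ 𝓕` with `λ(x) ≥ 0`.  Then `Σ a_n x^n` converges absolutely in `(𝓕, τ_w)`
if `|x[0]| < r` and diverges in `(𝓕, τ_w)` if `|x[0]| > r`. -/
theorem power_series_weak_convergence (γ : ℕ → Set ℚ) (hγ : IsFinWBPartition γ)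
    (a : ℕ → F)
    (hreg : WellOrderedSet (⋃ n, (a n).support))
    (hlam : Filter.atTop.limsup
        (fun n : ℕ => if a n = 0 then (⊥ : EReal)
          else ((-((a n).order : ℝ) / (n : ℝ) : ℝ) : EReal)) = 0)
    (x : F) (hx : x = 0 ∨ 0 ≤ x.order) :
    (ENNReal.ofReal |x.coeff 0| <
        (⨆ q ∈ ⋃ n, (a n).support,
          Filter.atTop.limsup fun n : ℕ =>
            ENNReal.ofReal (|(a n).coeff q| ^ ((n : ℝ)⁻¹)))⁻¹ →
      (∃ l : F, WeakConvTo γ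
          (fun m => ∑ n ∈ Finset.range (m + 1), Fabs (a n * x ^ n)) l) ∧
      ∃ l : F, WeakConvTo γ
          (fun m => ∑ n ∈ Finset.range (m + 1), a n * x ^ n) l) ∧
    ((⨆ q ∈ ⋃ n, (a n).support,
          Filter.atTop.limsup fun n : ℕ =>
            ENNReal.ofReal (|(a n).coeff q| ^ ((n : ℝ)⁻¹)))⁻¹ <
        ENNReal.ofReal |x.coeff 0| →
      ¬ ∃ l : F, WeakConvTo γ
          (fun m => ∑ n ∈ Finset.range (m + 1), a n * x ^ n) l) :=
  power_series_weak_convergence_general γ hγ a hreg x hx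
end
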